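/- Let γ > 0 and let C be an irreducible row-stochastic n×n matrix with positive left Perron vector c, Cᵀc = c, Σᵢ cᵢ = 1. Then the map f(p) = (diag(1 − γp) + Cᵀ diag(γp)) p has a unique fixed point p⋆ in the interior of the probability simplex, given explicitly by p⋆ᵢ = √cᵢ / Σⱼ √cⱼ. -/

import Mathlib

/-!
A fixed point of `f` is exactly a vector `p` whose entrywise square `p * p` is a left fixed
vector of `C`. By irreducibility every left fixed vector is a multiple of `c`: if `t` is the
least ratio `v i / c i`, then `v - t • c` is a nonnegative left fixed vector with a zero entry
`k`, and a positive entry `j` would make entry `k` positive through a power of `C` with a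
positive `(j, k)` entry. Hence `p * p` is proportional to `c`, and the normalization
`∑ i, p i = 1` leaves only `p = √c / ∑ j, √(c j)`.
-/

open Matrix

namespace Matrix

variable {ι R : Type*} [Fintype ι] [DecidableEq ι]

theorem vecMul_pow_eq_self [Semiring R] {A : Matrix ι ι R} {v : ι → R} (hv : v ᵥ* A = v) :
    ∀ m : ℕ, v ᵥ* (A ^ m) = v
  | 0 => by simp
  | m + 1 => by rw [pow_succ, ← vecMul_vecMul, vecMul_pow_eq_self hv m, hv]

theorem IsIrreducible.eq_zero_of_vecMul_eq_self [Ring R] [LinearOrder R] [IsStrictOrderedRing R]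
    {A : Matrix ι ι R} (hA : A.IsIrreducible) {v : ι → R} (hv0 : 0 ≤ v) (hv : v ᵥ* A = v)
    {k : ι} (hk : v k = 0) : v = 0 := by
  by_contra hne
  obtain ⟨j, hj⟩ : ∃ j, 0 < v j := by
    by_contra! h
    exact hne (funext fun i => le_antisymm (h i) (hv0 i))
  obtain ⟨m, -, hm⟩ := (isIrreducible_iff_exists_pow_pos hA.nonneg).1 hA j k
  have hsum : ∑ i, v i * (A ^ m) i k = 0 := by
    rw [← hk, ← congrFun (vecMul_pow_eq_self hv m) k]
    rfl
  have hle : v j * (A ^ m) j k ≤ ∑ i, v i * (A ^ m) i k :=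
    Finset.single_le_sum (fun i _ => mul_nonneg (hv0 i) (pow_apply_nonneg hA.nonneg m i k))
      (Finset.mem_univ j)
  exact (mul_pos hj hm).not_ge (hsum ▸ hle)

theorem IsIrreducible.exists_eq_smul_of_vecMul_eq_self [Field R] [LinearOrder R]
    [IsStrictOrderedRing R] {A : Matrix ι ι R} (hA : A.IsIrreducible) {c v : ι → R}
    (hc : ∀ i, 0 < c i) (hcA : c ᵥ* A = c) (hv : v ᵥ* A = v) : ∃ t : R, v = t • c := by
  cases isEmpty_or_nonempty ι
  · exact ⟨0, Subsingleton.elim _ _⟩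
  obtain ⟨k, -, hk⟩ := Finset.exists_min_image Finset.univ (fun i => v i / c i)
    Finset.univ_nonempty
  set t := v k / c k
  have hw0 : 0 ≤ v - t • c := fun i => by
    have := hk i (Finset.mem_univ i)
    simp only [Pi.zero_apply, Pi.sub_apply, Pi.smul_apply, smul_eq_mul, sub_nonneg]
    rwa [le_div_iff₀ (hc i)] at this
  have hw : (v - t • c) ᵥ* A = v - t • c := by rw [sub_vecMul, smul_vecMul, hv, hcA]
  have hwk : (v - t • c) k = 0 := by simp [t, div_mul_cancel₀ _ (hc k).ne']
  exact ⟨t, sub_eq_zero.1 (hA.eq_zero_of_vecMul_eq_self hw0 hw hwk)⟩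

end Matrix

section NormalizedSqrt

variable {ι : Type*} [Fintype ι]

noncomputable def normalizedSqrt (c : ι → ℝ) (i : ι) : ℝ :=
  Real.sqrt (c i) / ∑ j, Real.sqrt (c j)

theorem sum_sqrt_pos [Nonempty ι] {c : ι → ℝ} (hc : ∀ i, 0 < c i) :
    0 < ∑ j, Real.sqrt (c j) :=
  Finset.sum_pos (fun i _ => Real.sqrt_pos.2 (hc i)) Finset.univ_nonempty

theorem normalizedSqrt_pos [Nonempty ι] {c : ι → ℝ} (hc : ∀ i, 0 < c i) (i : ι) :
    0 < normalizedSqrt c i :=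
  div_pos (Real.sqrt_pos.2 (hc i)) (sum_sqrt_pos hc)

theorem sum_normalizedSqrt [Nonempty ι] {c : ι → ℝ} (hc : ∀ i, 0 < c i) :
    ∑ i, normalizedSqrt c i = 1 := by
  simp only [normalizedSqrt]
  rw [← Finset.sum_div, div_self (sum_sqrt_pos hc).ne']

theorem normalizedSqrt_mul_self {c : ι → ℝ} (hc : 0 ≤ c) :
    normalizedSqrt c * normalizedSqrt c = ((∑ j, Real.sqrt (c j)) ^ 2)⁻¹ • c := by
  funext i
  simp only [normalizedSqrt, Pi.mul_apply, Pi.smul_apply, smul_eq_mul, div_mul_div_comm,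
    Real.mul_self_sqrt (hc i)]
  ring

theorem eq_normalizedSqrt_of_mul_self_eq_smul {c q : ι → ℝ} {t : ℝ} (hc : 0 ≤ c) (hq : 0 ≤ q)
    (hq1 : ∑ i, q i = 1) (hqc : q * q = t • c) : q = normalizedSqrt c := by
  have hqi : ∀ i, q i = Real.sqrt t * Real.sqrt (c i) := fun i => by
    rw [← Real.sqrt_mul' t (hc i), ← smul_eq_mul, ← Pi.smul_apply, ← hqc, Pi.mul_apply,
      Real.sqrt_mul_self (hq i)]
  have hS : Real.sqrt t * ∑ j, Real.sqrt (c j) = 1 := by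
    rw [Finset.mul_sum, ← hq1]
    exact Finset.sum_congr rfl fun i _ => (hqi i).symm
  funext i
  rw [normalizedSqrt, eq_div_iff (right_ne_zero_of_mul_eq_one hS), hqi, mul_right_comm, hS,
    one_mul]

end NormalizedSqrt

theorem fixedPoint_iff_mul_self_vecMul_eq {ι : Type*} [Fintype ι] {γ : ℝ} (hγ : γ ≠ 0)
    (C : Matrix ι ι ℝ) (f : (ι → ℝ) → (ι → ℝ))
    (hf : ∀ p j, f p j = (1 - γ * p j) * p j + ∑ i, C i j * (γ * p i * p i)) (p : ι → ℝ) :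
    f p = p ↔ (p * p) ᵥ* C = p * p := by
  have key : ∀ j, f p j = p j + γ * (((p * p) ᵥ* C) j - (p * p) j) := fun j => by
    have : ∑ i, C i j * (γ * p i * p i) = γ * ∑ i, p i * p i * C i j := by
      rw [Finset.mul_sum]
      exact Finset.sum_congr rfl fun i _ => by ring
    rw [hf, this]
    simp only [vecMul, dotProduct, Pi.mul_apply]
    ring
  simp only [funext_iff, key, add_eq_left, mul_eq_zero, hγ, false_or, sub_eq_zero]

theorem stmt15_general (n : ℕ) (γ : ℝ) (hγ : 0 < γ)
    (C : Matrix (Fin n) (Fin n) ℝ)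
    (hC0 : ∀ i j, 0 ≤ C i j)
    (hirr : ∀ i j, ∃ m : ℕ, 0 < m ∧ 0 < (C ^ m) i j)
    (c : Fin n → ℝ) (hc0 : ∀ i, 0 < c i) (hc1 : ∑ i, c i = 1)
    (hcC : Cᵀ.mulVec c = c)
    (f : (Fin n → ℝ) → (Fin n → ℝ))
    (hf : ∀ p j, f p j = (1 - γ * p j) * p j + ∑ i, C i j * (γ * p i * p i))
    (pstar : Fin n → ℝ)
    (hpstar : ∀ i, pstar i = Real.sqrt (c i) / ∑ j, Real.sqrt (c j)) :
    ((∀ i, 0 < pstar i) ∧ (∑ i, pstar i = 1) ∧ f pstar = pstar) ∧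
    ∀ q : Fin n → ℝ, (∀ i, 0 < q i) → (∑ i, q i = 1) → f q = q → q = pstar := by
  have : Nonempty (Fin n) := (Finset.nonempty_of_sum_ne_zero (hc1.trans_ne one_ne_zero)).to_type
  have hirr' : C.IsIrreducible := (isIrreducible_iff_exists_pow_pos hC0).2 hirr
  rw [mulVec_transpose] at hcC
  obtain rfl : pstar = normalizedSqrt c := funext hpstar
  have hfix := fixedPoint_iff_mul_self_vecMul_eq hγ.ne' C f hf
  refine ⟨⟨normalizedSqrt_pos hc0, sum_normalizedSqrt hc0, (hfix _).2 ?_⟩,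
    fun q hq0 hq1 hqf => ?_⟩
  · rw [normalizedSqrt_mul_self fun i => (hc0 i).le, smul_vecMul, hcC]
  · obtain ⟨t, ht⟩ := hirr'.exists_eq_smul_of_vecMul_eq_self hc0 hcC ((hfix q).1 hqf)
    exact eq_normalizedSqrt_of_mul_self_eq_smul (fun i => (hc0 i).le) (fun i => (hq0 i).le)
      hq1 ht

/-- For `γ > 0` and `C` irreducible row-stochastic with positive normalized left Perron
vector `c`, the map `f(p) = (diag(1 − γp) + Cᵀ diag(γp)) p` has a unique fixed point in
the interior of the simplex, given by `p⋆ᵢ = √cᵢ / Σⱼ √cⱼ`. -/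
theorem stmt15 (n : ℕ) (γ : ℝ) (hγ : 0 < γ)
    (C : Matrix (Fin n) (Fin n) ℝ)
    (hC0 : ∀ i j, 0 ≤ C i j) (hC1 : ∀ i, ∑ j, C i j = 1)
    (hirr : ∀ i j, ∃ m : ℕ, 0 < m ∧ 0 < (C ^ m) i j)
    (c : Fin n → ℝ) (hc0 : ∀ i, 0 < c i) (hc1 : ∑ i, c i = 1)
    (hcC : Cᵀ.mulVec c = c)
    (f : (Fin n → ℝ) → (Fin n → ℝ))
    (hf : ∀ p j, f p j = (1 - γ * p j) * p j + ∑ i, C i j * (γ * p i * p i))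
    (pstar : Fin n → ℝ)
    (hpstar : ∀ i, pstar i = Real.sqrt (c i) / ∑ j, Real.sqrt (c j)) :
    ((∀ i, 0 < pstar i) ∧ (∑ i, pstar i = 1) ∧ f pstar = pstar) ∧
    ∀ q : Fin n → ℝ, (∀ i, 0 < q i) → (∑ i, q i = 1) → f q = q → q = pstar :=
  stmt15_general n γ hγ C hC0 hirr c hc0 hc1 hcC f hf pstar hpstar
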